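/- arXiv:0805.0720 — 3 statements merged into one kernel-verified Lean document; each statement's English description precedes it below -/
import Mathlib

section
/- For a continuous function f : ℝ → ℝ, ε > 0, and a ≤ b, the integral of the scale derivative satisfies ∫_a^b □_ε f(t) dt = [(1/2)((f⁺_ε(t) + f⁻_ε(t)) - i(f⁺_ε(t) - f⁻_ε(t)))]_a^b, where f⁺_ε(t) = (1/ε)∫_t^{t+ε} f(s) ds and f⁻_ε(t) = (1/ε)∫_{t-ε}^t f(s) ds. -/
noncomputable def deltaPlus (f : ℝ → ℝ) (ε t : ℝ) : ℝ := (f (t + ε) - f t) / ε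
noncomputable def deltaMinus (f : ℝ → ℝ) (ε t : ℝ) : ℝ := (f t - f (t - ε)) / ε

noncomputable def scaleDeriv (f : ℝ → ℝ) (ε t : ℝ) : ℂ :=
  (1 / 2) * (((deltaPlus f ε t + deltaMinus f ε t : ℝ) : ℂ)
    - Complex.I * ((deltaPlus f ε t - deltaMinus f ε t : ℝ) : ℂ))

/-- The ε-mean functions. -/
noncomputable def meanPlus (f : ℝ → ℝ) (ε t : ℝ) : ℝ := (1 / ε) * ∫ s in t..(t + ε), f s
noncomputable def meanMinus (f : ℝ → ℝ) (ε t : ℝ) : ℝ := (1 / ε) * ∫ s in (t - ε)..t, f s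

lemma integral_deltaPlus (f : ℝ → ℝ) (hf : Continuous f) (ε : ℝ) (hε : 0 < ε)
    (a b : ℝ) :
    (∫ t in a..b, deltaPlus f ε t) = meanPlus f ε b - meanPlus f ε a := by
  have hint : ∀ x y : ℝ, IntervalIntegrable f MeasureTheory.volume x y :=
    fun x y => hf.intervalIntegrable x y
  simp only [deltaPlus, meanPlus, div_eq_inv_mul, one_div]
  have hA : IntervalIntegrable (fun x => f (x + ε)) MeasureTheory.volume a b := by
    exact (hf.comp (continuous_id.add continuous_const)).intervalIntegrable a b
  rw [intervalIntegral.integral_const_mul, intervalIntegral.integral_sub hA (hint a b),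
    intervalIntegral.integral_comp_add_right]
  have h1 : (∫ t in a..(b+ε), f t) = (∫ t in a..b, f t) + ∫ t in b..(b+ε), f t :=
    (intervalIntegral.integral_add_adjacent_intervals (hint a b) (hint b (b+ε))).symm
  have h2 : (∫ t in a..(b+ε), f t) = (∫ t in a..(a+ε), f t) + ∫ t in (a+ε)..(b+ε), f t :=
    (intervalIntegral.integral_add_adjacent_intervals (hint a (a+ε)) (hint (a+ε) (b+ε))).symm
  linear_combination ε⁻¹ * (h1 - h2)

lemma integral_deltaMinus (f : ℝ → ℝ) (hf : Continuous f) (ε : ℝ) (hε : 0 < ε)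
    (a b : ℝ) :
    (∫ t in a..b, deltaMinus f ε t) = meanMinus f ε b - meanMinus f ε a := by
  have hint : ∀ x y : ℝ, IntervalIntegrable f MeasureTheory.volume x y :=
    fun x y => hf.intervalIntegrable x y
  simp only [deltaMinus, meanMinus, div_eq_inv_mul, one_div]
  have hA : IntervalIntegrable (fun x => f (x - ε)) MeasureTheory.volume a b := by
    exact (hf.comp (continuous_id.sub continuous_const)).intervalIntegrable a b
  rw [intervalIntegral.integral_const_mul, intervalIntegral.integral_sub (hint a b) hA]
  have : (∫ t in a..b, f (t - ε)) = ∫ t in (a-ε)..(b-ε), f t := by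
    rw [← intervalIntegral.integral_comp_sub_right]
  rw [this]
  have h1 : (∫ t in (a-ε)..b, f t) = (∫ t in (a-ε)..(b-ε), f t) + ∫ t in (b-ε)..b, f t :=
    (intervalIntegral.integral_add_adjacent_intervals (hint (a-ε) (b-ε)) (hint (b-ε) b)).symm
  have h2 : (∫ t in (a-ε)..b, f t) = (∫ t in (a-ε)..a, f t) + ∫ t in a..b, f t :=
    (intervalIntegral.integral_add_adjacent_intervals (hint (a-ε) a) (hint a b)).symm
  linear_combination ε⁻¹ * (h1 - h2)

/-- integral of the scale derivative in terms of boundary mean values. -/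
theorem integral_scaleDeriv (f : ℝ → ℝ) (hf : Continuous f) (ε : ℝ) (hε : 0 < ε)
    (a b : ℝ) (hab : a ≤ b) :
    (∫ t in a..b, scaleDeriv f ε t)
      = (fun t : ℝ => (1 / 2 : ℂ) * (((meanPlus f ε t + meanMinus f ε t : ℝ) : ℂ)
          - Complex.I * ((meanPlus f ε t - meanMinus f ε t : ℝ) : ℂ))) b
        - (fun t : ℝ => (1 / 2 : ℂ) * (((meanPlus f ε t + meanMinus f ε t : ℝ) : ℂ)
          - Complex.I * ((meanPlus f ε t - meanMinus f ε t : ℝ) : ℂ))) a := by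
  have hdp : Continuous (deltaPlus f ε) := by
    unfold deltaPlus
    exact ((hf.comp (continuous_id.add continuous_const)).sub hf).div_const ε
  have hdm : Continuous (deltaMinus f ε) := by
    unfold deltaMinus
    exact (hf.sub (hf.comp (continuous_id.sub continuous_const))).div_const ε
  have hp := integral_deltaPlus f hf ε hε a b
  have hm := integral_deltaMinus f hf ε hε a b
  simp only [scaleDeriv]
  rw [intervalIntegral.integral_const_mul]
  have hI1 : IntervalIntegrable (fun t => ((deltaPlus f ε t + deltaMinus f ε t : ℝ) : ℂ))
      MeasureTheory.volume a b :=
    ((Complex.continuous_ofReal.comp (hdp.add hdm))).intervalIntegrable a b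
  have hI2 : IntervalIntegrable (fun t => Complex.I * ((deltaPlus f ε t - deltaMinus f ε t : ℝ) : ℂ))
      MeasureTheory.volume a b :=
    ((continuous_const.mul (Complex.continuous_ofReal.comp (hdp.sub hdm)))).intervalIntegrable a b
  rw [intervalIntegral.integral_sub hI1 hI2, intervalIntegral.integral_const_mul]
  rw [intervalIntegral.integral_ofReal, intervalIntegral.integral_ofReal]
  rw [intervalIntegral.integral_add (hdp.intervalIntegrable a b) (hdm.intervalIntegrable a b),
    intervalIntegral.integral_sub (hdp.intervalIntegrable a b) (hdm.intervalIntegrable a b),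
    hp, hm]
  push_cast
  ring
end

section
/- Let f and g be continuous real-valued functions on ℝ. If the scale derivative of f·g is integrable on [a,b], then ∫_a^b □_ε(f·g)(t) dt depends only on the values of f·g on [a-ε, a+ε] ∪ [b-ε, b+ε]; more precisely, it equals (1/2)[((fg)⁺_ε + (fg)⁻_ε) - i((fg)⁺_ε - (fg)⁻_ε)] evaluated at b minus at a, where h⁺_ε(t) = (1/ε)∫_t^{t+ε} h and h⁻_ε(t) = (1/ε)∫_{t-ε}^t h. -/
lemma meanPlus_hasDerivAt {h : ℝ → ℝ} (hh : Continuous h) {ε : ℝ} (hε : ε ≠ 0) (t : ℝ) :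
    HasDerivAt (fun u => meanPlus h ε u) (deltaPlus h ε t) t := by
  set H : ℝ → ℝ := fun u => ∫ s in (0:ℝ)..u, h s with hH
  have key : ∀ u : ℝ, meanPlus h ε u = (1 / ε) * (H (u + ε) - H u) := by
    intro u
    rw [meanPlus, hH]
    simp only
    rw [intervalIntegral.integral_interval_sub_left (hh.intervalIntegrable _ _)
      (hh.intervalIntegrable _ _)]
  have hderiv : ∀ u : ℝ, HasDerivAt H (h u) u := fun u =>
    (hh.integral_hasStrictDerivAt 0 u).hasDerivAt
  have h1 : HasDerivAt (fun u => (1 / ε) * (H (u + ε) - H u))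
      ((1 / ε) * (h (t + ε) - h t)) t := by
    have := (((hderiv (t + ε)).comp t
      ((hasDerivAt_id t).add_const ε)).sub (hderiv t)).const_mul (1 / ε)
    simpa using this
  have : HasDerivAt (fun u => meanPlus h ε u) ((1 / ε) * (h (t + ε) - h t)) t := by
    rw [funext key]; exact h1
  simpa [deltaPlus, div_eq_inv_mul, one_div] using this

lemma meanMinus_hasDerivAt {h : ℝ → ℝ} (hh : Continuous h) {ε : ℝ} (hε : ε ≠ 0) (t : ℝ) :
    HasDerivAt (fun u => meanMinus h ε u) (deltaMinus h ε t) t := by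
  set H : ℝ → ℝ := fun u => ∫ s in (0:ℝ)..u, h s with hH
  have key : ∀ u : ℝ, meanMinus h ε u = (1 / ε) * (H u - H (u - ε)) := by
    intro u
    rw [meanMinus, hH]
    simp only
    rw [intervalIntegral.integral_interval_sub_left (hh.intervalIntegrable _ _)
      (hh.intervalIntegrable _ _)]
  have hderiv : ∀ u : ℝ, HasDerivAt H (h u) u := fun u =>
    (hh.integral_hasStrictDerivAt 0 u).hasDerivAt
  have h1 : HasDerivAt (fun u => (1 / ε) * (H u - H (u - ε)))
      ((1 / ε) * (h t - h (t - ε))) t := by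
    have := ((hderiv t).sub ((hderiv (t - ε)).comp t
      ((hasDerivAt_id t).sub_const ε))).const_mul (1 / ε)
    simpa using this
  have : HasDerivAt (fun u => meanMinus h ε u) ((1 / ε) * (h t - h (t - ε))) t := by
    rw [funext key]; exact h1
  simpa [deltaMinus, div_eq_inv_mul, one_div] using this

/-- the integral of `□_ε(f·g)` over `[a,b]` equals a boundary expression
depending only on the values of `f·g` near `a` and `b`. -/
theorem integral_scaleDeriv_mul (f g : ℝ → ℝ) (hf : Continuous f) (hg : Continuous g)
    (ε : ℝ) (hε : 0 < ε) (a b : ℝ) (hab : a ≤ b)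
    (hint : IntervalIntegrable (fun t => scaleDeriv (fun s => f s * g s) ε t)
      MeasureTheory.volume a b) :
    (∫ t in a..b, scaleDeriv (fun s => f s * g s) ε t)
      = (fun t : ℝ => (1 / 2 : ℂ)
          * (((meanPlus (fun s => f s * g s) ε t + meanMinus (fun s => f s * g s) ε t : ℝ) : ℂ)
            - Complex.I
              * ((meanPlus (fun s => f s * g s) ε t
                  - meanMinus (fun s => f s * g s) ε t : ℝ) : ℂ))) b
        - (fun t : ℝ => (1 / 2 : ℂ)
          * (((meanPlus (fun s => f s * g s) ε t + meanMinus (fun s => f s * g s) ε t : ℝ) : ℂ)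
            - Complex.I
              * ((meanPlus (fun s => f s * g s) ε t
                  - meanMinus (fun s => f s * g s) ε t : ℝ) : ℂ))) a := by
  set h : ℝ → ℝ := fun s => f s * g s with hh
  have hhc : Continuous h := hf.mul hg
  refine intervalIntegral.integral_eq_sub_of_hasDerivAt
    (f := fun t : ℝ => (1 / 2 : ℂ)
      * (((meanPlus h ε t + meanMinus h ε t : ℝ) : ℂ)
        - Complex.I * ((meanPlus h ε t - meanMinus h ε t : ℝ) : ℂ)))
    (fun t _ => ?_) hint
  have hp := meanPlus_hasDerivAt hhc hε.ne' t
  have hm := meanMinus_hasDerivAt hhc hε.ne' t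
  have hsum : HasDerivAt (fun u => ((meanPlus h ε u + meanMinus h ε u : ℝ) : ℂ))
      ((deltaPlus h ε t + deltaMinus h ε t : ℝ) : ℂ) t := (hp.add hm).ofReal_comp
  have hdiff : HasDerivAt (fun u => ((meanPlus h ε u - meanMinus h ε u : ℝ) : ℂ))
      ((deltaPlus h ε t - deltaMinus h ε t : ℝ) : ℂ) t := (hp.sub hm).ofReal_comp
  have := ((hsum.sub (hdiff.const_mul Complex.I)).const_mul ((1 : ℂ) / 2))
  simpa [scaleDeriv, mul_comm] using this
end

section
/- (Classical Noether theorem) Let L be a C² Lagrangian and q a C² solution of the Euler-Lagrange equation d/dt ∂₃L = ∂₂L. If the identity ∂₁L·τ + ∂₂L·ξ + ∂₃L·(ξ̇ - q̇τ̇) + L·τ̇ = 0 holds along q (where τ(t,q), ξ(t,q) are C¹ and ξ̇, τ̇ denote total derivatives along t ↦ (t,q(t))), then the quantity C(t) = ∂₃L(t,q,q̇)·ξ(t,q) + (L(t,q,q̇) - ∂₃L(t,q,q̇)·q̇)·τ(t,q) is constant on [a,b]. -/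
/-!
Along an Euler–Lagrange extremal the product rule, the chain rule for `L` and the
Euler–Lagrange equation `d/dt ∂₃L = ∂₂L` turn the time derivative of the Noether charge
`∂₃L·ξ + (L - ∂₃L·q̇)·τ` into the left-hand side of the invariance identity. The charge
therefore has zero derivative on `[a,b]`, and the mean value theorem makes it constant.
-/

open Set
open scoped InnerProductSpace

section NoetherCharge

variable {E : Type*} [NormedAddCommGroup E] [InnerProductSpace ℝ E]

/-- Here `p` stands for the momentum `∂₃L`, `v` for the velocity `q̇` and `ℓ` for the value of `L`. -/
def noetherCharge (p ξ v : E) (ℓ τ : ℝ) : ℝ :=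
  ⟪p, ξ⟫_ℝ + (ℓ - ⟪p, v⟫_ℝ) * τ

theorem HasDerivAt.noetherCharge {p ξ v : ℝ → E} {ℓ τ : ℝ → ℝ} {p' ξ' v' : E} {ℓ' τ' t : ℝ}
    (hp : HasDerivAt p p' t) (hξ : HasDerivAt ξ ξ' t) (hv : HasDerivAt v v' t)
    (hℓ : HasDerivAt ℓ ℓ' t) (hτ : HasDerivAt τ τ' t) :
    HasDerivAt (fun s => noetherCharge (p s) (ξ s) (v s) (ℓ s) (τ s))
      (⟪p t, ξ'⟫_ℝ + ⟪p', ξ t⟫_ℝ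
        + ((ℓ' - (⟪p t, v'⟫_ℝ + ⟪p', v t⟫_ℝ)) * τ t + (ℓ t - ⟪p t, v t⟫_ℝ) * τ')) t :=
  (hp.inner ℝ hξ).add ((hℓ.sub (hp.inner ℝ hv)).mul hτ)

end NoetherCharge

theorem eq_of_forall_hasDerivAt_zero_on_Icc {F : Type*} [NormedAddCommGroup F]
    [NormedSpace ℝ F] {f : ℝ → F} {a b x y : ℝ} (hf : ∀ t ∈ Icc a b, HasDerivAt f 0 t)
    (hx : x ∈ Icc a b) (hy : y ∈ Icc a b) : f x = f y := by
  have hconst := constant_of_has_deriv_right_zero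
    (fun t ht => (hf t ht).continuousAt.continuousWithinAt)
    (fun t ht => (hf t (Ico_subset_Icc_self ht)).hasDerivWithinAt)
  rw [hconst x hx, hconst y hy]

theorem noether_classical_general (n : ℕ) (a b : ℝ)
    (L L₁ : ℝ → EuclideanSpace ℝ (Fin n) → EuclideanSpace ℝ (Fin n) → ℝ)
    (L₂ L₃ : ℝ → EuclideanSpace ℝ (Fin n) → EuclideanSpace ℝ (Fin n) →
      EuclideanSpace ℝ (Fin n))
    (q q' q'' : ℝ → EuclideanSpace ℝ (Fin n))
    (hq' : ∀ t, HasDerivAt q' (q'' t) t)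
    -- chain rule for L along the curve (consequence of L being C²)
    (hchain : ∀ t, HasDerivAt (fun t => L t (q t) (q' t))
      (L₁ t (q t) (q' t) + ⟪L₂ t (q t) (q' t), q' t⟫_ℝ
        + ⟪L₃ t (q t) (q' t), q'' t⟫_ℝ) t)
    -- Euler-Lagrange equation
    (hEL : ∀ t, HasDerivAt (fun t => L₃ t (q t) (q' t)) (L₂ t (q t) (q' t)) t)
    -- symmetry generators and their total time derivatives along q
    (τ : ℝ → EuclideanSpace ℝ (Fin n) → ℝ)
    (ξ : ℝ → EuclideanSpace ℝ (Fin n) → EuclideanSpace ℝ (Fin n))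
    (τd : ℝ → ℝ) (ξd : ℝ → EuclideanSpace ℝ (Fin n))
    (hτd : ∀ t, HasDerivAt (fun t => τ t (q t)) (τd t) t)
    (hξd : ∀ t, HasDerivAt (fun t => ξ t (q t)) (ξd t) t)
    -- invariance identity along q
    (hinv : ∀ t ∈ Set.Icc a b,
      L₁ t (q t) (q' t) * τ t (q t)
        + ⟪L₂ t (q t) (q' t), ξ t (q t)⟫_ℝ
        + ⟪L₃ t (q t) (q' t), ξd t - τd t • q' t⟫_ℝ
        + L t (q t) (q' t) * τd t = 0) :
    ∀ t₁ ∈ Set.Icc a b, ∀ t₂ ∈ Set.Icc a b,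
      ⟪L₃ t₁ (q t₁) (q' t₁), ξ t₁ (q t₁)⟫_ℝ
          + (L t₁ (q t₁) (q' t₁) - ⟪L₃ t₁ (q t₁) (q' t₁), q' t₁⟫_ℝ) * τ t₁ (q t₁)
        = ⟪L₃ t₂ (q t₂) (q' t₂), ξ t₂ (q t₂)⟫_ℝ
          + (L t₂ (q t₂) (q' t₂) - ⟪L₃ t₂ (q t₂) (q' t₂), q' t₂⟫_ℝ) * τ t₂ (q t₂) := by
  have hcharge : ∀ t ∈ Icc a b, HasDerivAt (fun s => noetherCharge (L₃ s (q s) (q' s))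
      (ξ s (q s)) (q' s) (L s (q s) (q' s)) (τ s (q s))) 0 t := by
    intro t ht
    refine ((hEL t).noetherCharge (hξd t) (hq' t) (hchain t) (hτd t)).congr_deriv ?_
    have hinv_t := hinv t ht
    rw [inner_sub_right, real_inner_smul_right] at hinv_t
    linear_combination hinv_t
  exact fun t₁ h₁ t₂ h₂ => eq_of_forall_hasDerivAt_zero_on_Icc hcharge h₁ h₂

/-- classical Noether theorem: if the invariance identity
`∂₁L·τ + ∂₂L·ξ + ∂₃L·(ξ̇ - q̇τ̇) + L·τ̇ = 0` holds along an Euler-Lagrange extremal `q`,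
then `C(t) = ∂₃L·ξ + (L - ∂₃L·q̇)·τ` is constant on `[a,b]`. -/
theorem noether_classical (n : ℕ) (a b : ℝ) (hab : a < b)
    (L L₁ : ℝ → EuclideanSpace ℝ (Fin n) → EuclideanSpace ℝ (Fin n) → ℝ)
    (L₂ L₃ : ℝ → EuclideanSpace ℝ (Fin n) → EuclideanSpace ℝ (Fin n) →
      EuclideanSpace ℝ (Fin n))
    (hL1 : ∀ t x v, HasDerivAt (fun s => L s x v) (L₁ t x v) t)
    (hL2 : ∀ t x v, HasGradientAt (fun y => L t y v) (L₂ t x v) x)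
    (hL3 : ∀ t x v, HasGradientAt (fun w => L t x w) (L₃ t x v) v)
    (q q' q'' : ℝ → EuclideanSpace ℝ (Fin n))
    (hq : ∀ t, HasDerivAt q (q' t) t) (hq' : ∀ t, HasDerivAt q' (q'' t) t)
    -- chain rule for L along the curve (consequence of L being C²)
    (hchain : ∀ t, HasDerivAt (fun t => L t (q t) (q' t))
      (L₁ t (q t) (q' t) + ⟪L₂ t (q t) (q' t), q' t⟫_ℝ
        + ⟪L₃ t (q t) (q' t), q'' t⟫_ℝ) t)
    -- Euler-Lagrange equation
    (hEL : ∀ t, HasDerivAt (fun t => L₃ t (q t) (q' t)) (L₂ t (q t) (q' t)) t)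
    -- symmetry generators and their total time derivatives along q
    (τ : ℝ → EuclideanSpace ℝ (Fin n) → ℝ)
    (ξ : ℝ → EuclideanSpace ℝ (Fin n) → EuclideanSpace ℝ (Fin n))
    (τd : ℝ → ℝ) (ξd : ℝ → EuclideanSpace ℝ (Fin n))
    (hτd : ∀ t, HasDerivAt (fun t => τ t (q t)) (τd t) t)
    (hξd : ∀ t, HasDerivAt (fun t => ξ t (q t)) (ξd t) t)
    -- invariance identity along q
    (hinv : ∀ t ∈ Set.Icc a b,
      L₁ t (q t) (q' t) * τ t (q t)
        + ⟪L₂ t (q t) (q' t), ξ t (q t)⟫_ℝ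
        + ⟪L₃ t (q t) (q' t), ξd t - τd t • q' t⟫_ℝ
        + L t (q t) (q' t) * τd t = 0) :
    ∀ t₁ ∈ Set.Icc a b, ∀ t₂ ∈ Set.Icc a b,
      ⟪L₃ t₁ (q t₁) (q' t₁), ξ t₁ (q t₁)⟫_ℝ
          + (L t₁ (q t₁) (q' t₁) - ⟪L₃ t₁ (q t₁) (q' t₁), q' t₁⟫_ℝ) * τ t₁ (q t₁)
        = ⟪L₃ t₂ (q t₂) (q' t₂), ξ t₂ (q t₂)⟫_ℝ
          + (L t₂ (q t₂) (q' t₂) - ⟪L₃ t₂ (q t₂) (q' t₂), q' t₂⟫_ℝ) * τ t₂ (q t₂) :=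
  noether_classical_general n a b L L₁ L₂ L₃ q q' q'' hq' hchain hEL τ ξ τd ξd hτd hξd hinv
end
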